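/- Let u: U → ℝ be C⁴ and biharmonic (Δ²u = 0) on an open set U ⊆ ℝ² symmetric about the x-axis, such that u(x,0)=0 and ∂u/∂y(x,0)=0 on U ∩ {y=0}. Then the function v(x₀,y₀) := -u(x₀,-y₀) - 2y₀ ∂u/∂y(x₀,-y₀) - y₀² Δu(x₀,-y₀), defined for (x₀,y₀) with (x₀,-y₀) ∈ U, is biharmonic and agrees with u together with its first normal derivative on the x-axis. -/

import Mathlib

/-!
Write `w(x, y) = u(x, -y)`; then `poritskyV u = -w + 2 y ∂_y w - y² Δw`. The rules
`Δ(y f) = y Δf + 2 ∂_y f`, `Δ(y² f) = y² Δf + 4 y ∂_y f + 2 f` and `Δ ∂_y = ∂_y Δ` give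
`Δv = -3 Δw + 4 ∂_y² w - 2 y ∂_y Δw - y² Δ²w`, and when `Δ²w = 0` one more Laplacian gives
`-3 Δ²w + 4 ∂_y² Δw - 4 ∂_y² Δw - 2 y ∂_y Δ²w = 0`. This needs three derivatives of `Δw`, which is
only `C²` a priori; but `Δw` is harmonic, hence real analytic. On the axis `v = -w` and
`∂_y v = ∂_y w = -∂_y u`, so the clamped conditions make both traces agree with those of `u`.
-/

open MeasureTheory Set

/-- Partial derivative in the first (x) coordinate. -/
noncomputable def pdx (u : ℝ × ℝ → ℝ) : ℝ × ℝ → ℝ :=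
  fun p => deriv (fun t => u (t, p.2)) p.1

/-- Partial derivative in the second (y) coordinate. -/
noncomputable def pdy (u : ℝ × ℝ → ℝ) : ℝ × ℝ → ℝ :=
  fun p => deriv (fun t => u (p.1, t)) p.2

/-- The Laplacian ∂²/∂x² + ∂²/∂y². -/
noncomputable def lap (u : ℝ × ℝ → ℝ) : ℝ × ℝ → ℝ :=
  fun p => pdx (pdx u) p + pdy (pdy u) p

/-- Poritsky's reflection for the clamped plate:
`v(x₀,y₀) = -u(x₀,-y₀) - 2 y₀ u_y(x₀,-y₀) - y₀² Δu(x₀,-y₀)`. -/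
noncomputable def poritskyV (u : ℝ × ℝ → ℝ) : ℝ × ℝ → ℝ :=
  fun p => -u (p.1, -p.2) - 2 * p.2 * pdy u (p.1, -p.2) - p.2 ^ 2 * lap u (p.1, -p.2)

open Filter Topology
open scoped ContDiff

variable {f g : ℝ × ℝ → ℝ} {p : ℝ × ℝ}

theorem ContDiffAt.eventually_differentiableAt {E F : Type*} [NormedAddCommGroup E]
    [NormedSpace ℝ E] [NormedAddCommGroup F] [NormedSpace ℝ F] {h : E → F} {x : E}
    {n : WithTop ℕ∞} (hh : ContDiffAt ℝ n h x) (hn : 1 ≤ n) :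
    ∀ᶠ y in 𝓝 x, DifferentiableAt ℝ h y :=
  ((hh.of_le hn).eventually (by simp)).mono fun _ hy => hy.differentiableAt one_ne_zero

theorem pdx_congr (h : f =ᶠ[𝓝 p] g) : pdx f p = pdx g p :=
  (h.comp_tendsto ((continuous_id.prodMk continuous_const).tendsto' p.1 p rfl)).deriv_eq

theorem pdy_congr (h : f =ᶠ[𝓝 p] g) : pdy f p = pdy g p :=
  (h.comp_tendsto ((continuous_const.prodMk continuous_id).tendsto' p.2 p rfl)).deriv_eq

theorem lap_congr (h : f =ᶠ[𝓝 p] g) : lap f p = lap g p := by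
  have hx : pdx f =ᶠ[𝓝 p] pdx g := h.eventuallyEq_nhds.mono fun _ hq => pdx_congr hq
  have hy : pdy f =ᶠ[𝓝 p] pdy g := h.eventuallyEq_nhds.mono fun _ hq => pdy_congr hq
  rw [lap, lap, pdx_congr hx, pdy_congr hy]

theorem DifferentiableAt.hasDerivAt_pdy (hf : DifferentiableAt ℝ f p) :
    HasDerivAt (fun t => f (p.1, t)) (pdy f p) p.2 :=
  (hf.comp p.2 ((differentiableAt_const p.1).prodMk differentiableAt_id)).hasDerivAt

theorem pdx_eq_fderiv (hf : DifferentiableAt ℝ f p) : pdx f p = fderiv ℝ f p (1, 0) :=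
  (hf.hasFDerivAt.comp_hasDerivAt p.1
    ((hasDerivAt_id p.1).prodMk (hasDerivAt_const p.1 p.2))).deriv

theorem pdy_eq_fderiv (hf : DifferentiableAt ℝ f p) : pdy f p = fderiv ℝ f p (0, 1) :=
  (hf.hasFDerivAt.comp_hasDerivAt p.2
    ((hasDerivAt_const p.2 p.1).prodMk (hasDerivAt_id p.2))).deriv

theorem pdy_add (hf : DifferentiableAt ℝ f p) (hg : DifferentiableAt ℝ g p) :
    pdy (fun q => f q + g q) p = pdy f p + pdy g p :=
  (hf.hasDerivAt_pdy.add hg.hasDerivAt_pdy).deriv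

theorem pdx_eventuallyEq_fderiv {n : WithTop ℕ∞} (hf : ContDiffAt ℝ n f p) (hn : 1 ≤ n) :
    pdx f =ᶠ[𝓝 p] fun q => fderiv ℝ f q (1, 0) :=
  (hf.eventually_differentiableAt hn).mono fun _ hq => pdx_eq_fderiv hq

theorem pdy_eventuallyEq_fderiv {n : WithTop ℕ∞} (hf : ContDiffAt ℝ n f p) (hn : 1 ≤ n) :
    pdy f =ᶠ[𝓝 p] fun q => fderiv ℝ f q (0, 1) :=
  (hf.eventually_differentiableAt hn).mono fun _ hq => pdy_eq_fderiv hq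

theorem ContDiffAt.pdx {m n : WithTop ℕ∞} (hf : ContDiffAt ℝ m f p) (hnm : n + 1 ≤ m) :
    ContDiffAt ℝ n (pdx f) p :=
  ((hf.fderiv_right hnm).clm_apply contDiffAt_const).congr_of_eventuallyEq
    (pdx_eventuallyEq_fderiv hf (le_add_self.trans hnm))

theorem ContDiffAt.pdy {m n : WithTop ℕ∞} (hf : ContDiffAt ℝ m f p) (hnm : n + 1 ≤ m) :
    ContDiffAt ℝ n (pdy f) p :=
  ((hf.fderiv_right hnm).clm_apply contDiffAt_const).congr_of_eventuallyEq
    (pdy_eventuallyEq_fderiv hf (le_add_self.trans hnm))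

theorem ContDiffAt.lap {m n : WithTop ℕ∞} (hf : ContDiffAt ℝ m f p) (hnm : n + 2 ≤ m) :
    ContDiffAt ℝ n (lap f) p := by
  have hnm' : n + 1 + 1 ≤ m := by rwa [add_assoc, one_add_one_eq_two]
  exact ((hf.pdx hnm').pdx le_rfl).add ((hf.pdy hnm').pdy le_rfl)

theorem pdx_fderiv_apply (hf : DifferentiableAt ℝ (fderiv ℝ f) p) (v : ℝ × ℝ) :
    pdx (fun q => fderiv ℝ f q v) p = fderiv ℝ (fderiv ℝ f) p (1, 0) v := by
  rw [pdx_eq_fderiv (hf.clm_apply (differentiableAt_const v)),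
    fderiv_clm_apply hf (differentiableAt_const v)]
  simp

theorem pdy_fderiv_apply (hf : DifferentiableAt ℝ (fderiv ℝ f) p) (v : ℝ × ℝ) :
    pdy (fun q => fderiv ℝ f q v) p = fderiv ℝ (fderiv ℝ f) p (0, 1) v := by
  rw [pdy_eq_fderiv (hf.clm_apply (differentiableAt_const v)),
    fderiv_clm_apply hf (differentiableAt_const v)]
  simp

theorem ContDiffAt.differentiableAt_fderiv {n : WithTop ℕ∞} (hf : ContDiffAt ℝ n f p)
    (hn : 2 ≤ n) : DifferentiableAt ℝ (fderiv ℝ f) p :=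
  (hf.fderiv_right (m := 1) (by simpa [one_add_one_eq_two] using hn)).differentiableAt one_ne_zero

theorem lap_eq_fderiv_fderiv (hf : ContDiffAt ℝ 2 f p) :
    lap f p = fderiv ℝ (fderiv ℝ f) p (1, 0) (1, 0) + fderiv ℝ (fderiv ℝ f) p (0, 1) (0, 1) := by
  have hf' := hf.differentiableAt_fderiv le_rfl
  rw [lap, pdx_congr (pdx_eventuallyEq_fderiv hf one_le_two),
    pdy_congr (pdy_eventuallyEq_fderiv hf one_le_two), pdx_fderiv_apply hf', pdy_fderiv_apply hf']

theorem pdx_pdy_comm (hf : ContDiffAt ℝ 2 f p) : pdx (pdy f) p = pdy (pdx f) p := by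
  have hf' := hf.differentiableAt_fderiv le_rfl
  rw [pdx_congr (pdy_eventuallyEq_fderiv hf one_le_two),
    pdy_congr (pdx_eventuallyEq_fderiv hf one_le_two), pdx_fderiv_apply hf',
    pdy_fderiv_apply hf', hf.isSymmSndFDerivAt (by simp)]

theorem laplacian_comp_equivRealProd {z : ℂ}
    (hf : ContDiffAt ℝ 2 f (Complex.equivRealProdCLM z)) :
    Laplacian.laplacian (f ∘ Complex.equivRealProdCLM) z =
      lap f (Complex.equivRealProdCLM z) := by
  have h := Complex.equivRealProdCLM.iteratedFDerivWithin_comp_right f uniqueDiffOn_univ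
    (Set.mem_univ (Complex.equivRealProdCLM z)) 2
  rw [Set.preimage_univ, iteratedFDerivWithin_univ, iteratedFDerivWithin_univ] at h
  rw [InnerProductSpace.laplacian_eq_iteratedFDeriv_complexPlane, lap_eq_fderiv_fderiv hf]
  beta_reduce
  rw [h]
  simp [iteratedFDeriv_two_apply]

theorem analyticAt_of_lap_eq_zero (hf : ContDiffAt ℝ 2 f p) (hΔ : ∀ᶠ q in 𝓝 p, lap f q = 0) :
    AnalyticAt ℝ f p := by
  set e := Complex.equivRealProdCLM
  have hpull : ∀ᶠ z in 𝓝 (e.symm p), ContDiffAt ℝ 2 f (e z) ∧ lap f (e z) = 0 :=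
    (e.continuous.tendsto' _ _ (by simp)).eventually ((hf.eventually (by simp)).and hΔ)
  have hharm : InnerProductSpace.HarmonicAt (f ∘ e) (e.symm p) := by
    refine ⟨hpull.self_of_nhds.1.comp _ e.contDiff.contDiffAt, hpull.mono fun z hz => ?_⟩
    rw [laplacian_comp_equivRealProd hz.1, hz.2, Pi.zero_apply]
  simpa [Function.comp_def] using
    (HarmonicAt.analyticAt hharm).comp ((e.symm : ℝ × ℝ →L[ℝ] ℂ).analyticAt p)

theorem lap_eq_iteratedDeriv (f : ℝ × ℝ → ℝ) (p : ℝ × ℝ) :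
    lap f p = iteratedDeriv 2 (fun t => f (t, p.2)) p.1 +
      iteratedDeriv 2 (fun t => f (p.1, t)) p.2 := by
  simp only [iteratedDeriv_eq_iterate]
  rfl

theorem ContDiffAt.sliceX {n : WithTop ℕ∞} (hf : ContDiffAt ℝ n f p) :
    ContDiffAt ℝ n (fun t => f (t, p.2)) p.1 :=
  hf.comp p.1 (contDiffAt_id.prodMk contDiffAt_const)

theorem ContDiffAt.sliceY {n : WithTop ℕ∞} (hf : ContDiffAt ℝ n f p) :
    ContDiffAt ℝ n (fun t => f (p.1, t)) p.2 :=
  hf.comp p.2 (contDiffAt_const.prodMk contDiffAt_id)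

theorem lap_add (hf : ContDiffAt ℝ 2 f p) (hg : ContDiffAt ℝ 2 g p) :
    lap (fun q => f q + g q) p = lap f p + lap g p := by
  simp only [lap_eq_iteratedDeriv]
  rw [iteratedDeriv_fun_add hf.sliceX hg.sliceX,
    iteratedDeriv_fun_add hf.sliceY hg.sliceY]
  ring

theorem lap_sub (hf : ContDiffAt ℝ 2 f p) (hg : ContDiffAt ℝ 2 g p) :
    lap (fun q => f q - g q) p = lap f p - lap g p := by
  simp only [lap_eq_iteratedDeriv]
  rw [iteratedDeriv_fun_sub hf.sliceX hg.sliceX,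
    iteratedDeriv_fun_sub hf.sliceY hg.sliceY]
  ring

theorem lap_neg (f : ℝ × ℝ → ℝ) (p : ℝ × ℝ) : lap (fun q => -f q) p = -lap f p := by
  simp only [lap_eq_iteratedDeriv, iteratedDeriv_fun_neg]
  ring

theorem lap_const_mul (c : ℝ) (f : ℝ × ℝ → ℝ) (p : ℝ × ℝ) :
    lap (fun q => c * f q) p = c * lap f p := by
  simp only [lap_eq_iteratedDeriv, iteratedDeriv_const_mul_field]
  ring

theorem lap_comp_snd_mul {φ : ℝ → ℝ} (hφ : ContDiffAt ℝ 2 φ p.2) (hf : ContDiffAt ℝ 2 f p) :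
    lap (fun q => φ q.2 * f q) p =
      φ p.2 * lap f p + 2 * deriv φ p.2 * pdy f p + iteratedDeriv 2 φ p.2 * f p := by
  simp only [lap_eq_iteratedDeriv]
  rw [iteratedDeriv_const_mul_field, iteratedDeriv_fun_mul hφ hf.sliceY]
  simp only [Finset.sum_range_succ, Finset.range_one, Finset.sum_singleton, Nat.choose_zero_right,
    Nat.choose_succ_self_right, Nat.choose_self, Nat.cast_one, Nat.cast_ofNat, Nat.reduceAdd,
    tsub_zero, Nat.add_one_sub_one, tsub_self, iteratedDeriv_zero, iteratedDeriv_one, one_mul,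
    Prod.mk.eta, pdy]
  ring

theorem lap_snd_mul (hf : ContDiffAt ℝ 2 f p) :
    lap (fun q => q.2 * f q) p = p.2 * lap f p + 2 * pdy f p := by
  rw [lap_comp_snd_mul (φ := fun t => t) contDiffAt_id hf]
  simp [iteratedDeriv_fun_id]

theorem lap_snd_sq_mul (hf : ContDiffAt ℝ 2 f p) :
    lap (fun q => q.2 ^ 2 * f q) p = p.2 ^ 2 * lap f p + 4 * p.2 * pdy f p + 2 * f p := by
  rw [lap_comp_snd_mul (φ := (· ^ 2)) (contDiffAt_id.pow 2) hf]
  simp only [deriv_pow_field, iteratedDeriv_pow]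
  ring

theorem lap_pdy_comm (hf : ContDiffAt ℝ 3 f p) : lap (pdy f) p = pdy (lap f) p := by
  have hx : ContDiffAt ℝ 2 (pdx f) p := hf.pdx (by norm_num)
  have hxx : DifferentiableAt ℝ (pdx (pdx f)) p :=
    (hx.pdx (n := 1) (by norm_num)).differentiableAt one_ne_zero
  have hyy : DifferentiableAt ℝ (pdy (pdy f)) p :=
    ((hf.pdy (n := 2) (by norm_num)).pdy (n := 1) (by norm_num)).differentiableAt one_ne_zero
  have hcomm : pdx (pdy f) =ᶠ[𝓝 p] pdy (pdx f) :=
    (hf.eventually (by simp)).mono fun _ hq => pdx_pdy_comm (hq.of_le (by norm_num))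
  calc lap (pdy f) p = pdx (pdy (pdx f)) p + pdy (pdy (pdy f)) p := by
        rw [lap, pdx_congr hcomm]
    _ = pdy (pdx (pdx f)) p + pdy (pdy (pdy f)) p := by rw [pdx_pdy_comm hx]
    _ = pdy (lap f) p := (pdy_add hxx hyy).symm

noncomputable def poritskyOp (w : ℝ × ℝ → ℝ) : ℝ × ℝ → ℝ :=
  fun q => -w q + 2 * (q.2 * pdy w q) - q.2 ^ 2 * lap w q

theorem lap_poritskyOp {w : ℝ × ℝ → ℝ} (hw : ContDiffAt ℝ 4 w p) :
    lap (poritskyOp w) p = -3 * lap w p + 4 * pdy (pdy w) p - 2 * (p.2 * pdy (lap w) p) -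
      p.2 ^ 2 * lap (lap w) p := by
  have hw2 : ContDiffAt ℝ 2 w p := hw.of_le (by norm_num)
  have hwy : ContDiffAt ℝ 2 (pdy w) p := hw.pdy (by norm_num)
  have hg : ContDiffAt ℝ 2 (lap w) p := hw.lap (by norm_num)
  unfold poritskyOp
  rw [lap_sub (by fun_prop) (by fun_prop), lap_add (by fun_prop) (by fun_prop),
    lap_neg, lap_const_mul, lap_snd_mul hwy, lap_snd_sq_mul hg,
    lap_pdy_comm (hw.of_le (by norm_num))]
  ring

theorem lap_lap_poritskyOp_eq_zero {w : ℝ × ℝ → ℝ} (hw : ∀ᶠ q in 𝓝 p, ContDiffAt ℝ 4 w q)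
    (hb : ∀ᶠ q in 𝓝 p, lap (lap w) q = 0) : lap (lap (poritskyOp w)) p = 0 := by
  have hw4 : ContDiffAt ℝ 4 w p := hw.self_of_nhds
  have hg : ContDiffAt ℝ 3 (lap w) p :=
    (analyticAt_of_lap_eq_zero (hw4.lap (by norm_num)) hb).contDiffAt
  have hg2 : ContDiffAt ℝ 2 (lap w) p := hg.of_le (by norm_num)
  have hgy : ContDiffAt ℝ 2 (pdy (lap w)) p := hg.pdy (by norm_num)
  have hwyy : ContDiffAt ℝ 2 (pdy (pdy w)) p := hw4.pdy (n := 3) (by norm_num) |>.pdy (by norm_num)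
  have hv : lap (poritskyOp w) =ᶠ[𝓝 p]
      fun q => -3 * lap w q + 4 * pdy (pdy w) q - 2 * (q.2 * pdy (lap w) q) :=
    (hw.and hb).mono fun q hq => by rw [lap_poritskyOp hq.1, hq.2]; ring
  have hwy : lap (pdy w) =ᶠ[𝓝 p] pdy (lap w) :=
    hw.mono fun q hq => lap_pdy_comm (hq.of_le (by norm_num))
  have hgyy : pdy (lap (lap w)) p = 0 := (pdy_congr hb).trans (deriv_const _ _)
  rw [lap_congr hv, lap_sub (by fun_prop) (by fun_prop), lap_add (by fun_prop) (by fun_prop),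
    lap_const_mul, lap_const_mul, lap_const_mul, lap_snd_mul hgy,
    lap_pdy_comm (hw4.pdy (by norm_num)), pdy_congr hwy, lap_pdy_comm hg, hgyy, hb.self_of_nhds]
  ring

theorem pdy_comp_reflect (f : ℝ × ℝ → ℝ) (q : ℝ × ℝ) :
    pdy (fun r => f (r.1, -r.2)) q = -pdy f (q.1, -q.2) :=
  deriv_comp_neg (f := fun s => f (q.1, s)) (x := q.2)

theorem lap_comp_reflect (f : ℝ × ℝ → ℝ) :
    lap (fun r => f (r.1, -r.2)) = fun q => lap f (q.1, -q.2) := by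
  funext q
  have hy : pdy (fun r => f (r.1, -r.2)) = fun r => -pdy f (r.1, -r.2) :=
    funext (pdy_comp_reflect f)
  change pdx (pdx f) (q.1, -q.2) + pdy (pdy (fun r => f (r.1, -r.2))) q = _
  rw [hy, show pdy (fun r => -pdy f (r.1, -r.2)) q = -pdy (fun r => pdy f (r.1, -r.2)) q from
    deriv.neg, pdy_comp_reflect, neg_neg]
  rfl

theorem poritskyV_eq_poritskyOp (u : ℝ × ℝ → ℝ) :
    poritskyV u = poritskyOp (fun q => u (q.1, -q.2)) := by
  funext q
  simp only [poritskyV, poritskyOp, pdy_comp_reflect, lap_comp_reflect]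
  ring

theorem poritskyOp_mk_zero (w : ℝ × ℝ → ℝ) (x : ℝ) :
    poritskyOp w (x, 0) = -w (x, 0) := by
  simp [poritskyOp]

theorem pdy_poritskyOp_mk_zero {w : ℝ × ℝ → ℝ} {x : ℝ} (hw : DifferentiableAt ℝ w (x, 0))
    (hwy : DifferentiableAt ℝ (pdy w) (x, 0)) (hg : DifferentiableAt ℝ (lap w) (x, 0)) :
    pdy (poritskyOp w) (x, 0) = pdy w (x, 0) := by
  have H := (hw.hasDerivAt_pdy.neg.add (((hasDerivAt_id' (0 : ℝ)).mul
    hwy.hasDerivAt_pdy).const_mul 2)).sub ((hasDerivAt_pow 2 (0 : ℝ)).mul hg.hasDerivAt_pdy)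
  refine H.deriv.trans ?_
  simp only [one_mul, zero_mul, mul_zero, add_zero, sub_zero, pow_one, ne_eq,
    OfNat.ofNat_ne_zero, not_false_eq_true, zero_pow, Nat.cast_ofNat, Nat.add_one_sub_one]
  ring

/-- Poritsky's reflection formula for biharmonic functions with clamped
(Dirichlet) boundary conditions `u = ∂ₙ u = 0` on the x-axis: the reflected
function is biharmonic on the symmetric set `U` and agrees with `u` together
with its first normal derivative on the x-axis. -/
theorem poritsky_reflection_biharmonic
    (U : Set (ℝ × ℝ)) (hU : IsOpen U)
    (hsym : ∀ x y : ℝ, (x, y) ∈ U ↔ (x, -y) ∈ U)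
    (u : ℝ × ℝ → ℝ)
    (hC4 : ContDiffOn ℝ 4 u U)
    (hbih : ∀ p ∈ U, lap (lap u) p = 0)
    (h0 : ∀ x : ℝ, (x, (0 : ℝ)) ∈ U → u (x, 0) = 0)
    (h1 : ∀ x : ℝ, (x, (0 : ℝ)) ∈ U → pdy u (x, 0) = 0) :
    (∀ p ∈ U, lap (lap (poritskyV u)) p = 0) ∧
    (∀ x : ℝ, (x, (0 : ℝ)) ∈ U →
      poritskyV u (x, 0) = u (x, 0) ∧ pdy (poritskyV u) (x, 0) = pdy u (x, 0)) := by
  have hw : ∀ q ∈ U, ContDiffAt ℝ 4 (fun r => u (r.1, -r.2)) q := fun q hq =>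
    (hC4.contDiffAt (hU.mem_nhds ((hsym q.1 q.2).1 hq))).comp q
      (contDiffAt_fst.prodMk contDiffAt_snd.neg)
  have hwb : ∀ q ∈ U, lap (lap fun r => u (r.1, -r.2)) q = 0 := fun q hq => by
    simpa only [lap_comp_reflect] using hbih _ ((hsym q.1 q.2).1 hq)
  rw [poritskyV_eq_poritskyOp]
  refine ⟨fun p hp => lap_lap_poritskyOp_eq_zero (eventually_of_mem (hU.mem_nhds hp) hw)
    (eventually_of_mem (hU.mem_nhds hp) hwb), fun x hx => ?_⟩
  have hwx := hw _ hx
  rw [poritskyOp_mk_zero, pdy_poritskyOp_mk_zero (hwx.differentiableAt (by simp))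
    ((hwx.pdy (n := 1) (by norm_num)).differentiableAt one_ne_zero)
    ((hwx.lap (n := 1) (by norm_num)).differentiableAt one_ne_zero), pdy_comp_reflect]
  simp [h0 x hx, h1 x hx]
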